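/- Let D be a friendship digraph and let u and v be two distinct vertices such that (u,v) is not an arc of D or (v,u) is not an arc of D. Then d⁺(u) = d⁺(v). -/

import Mathlib

/-!
If `(u, v)` is not an arc, sending an in-neighbour `p` of `v` to the common out-neighbour of `u`
and `p` is injective, so `d⁻(v) ≤ d⁺(u)`. Taking `u = v` and summing shows `d⁻ = d⁺` everywhere.
Double counting ordered pairs of distinct vertices with a common in-neighbour then shows that the
converse digraph is a friendship digraph as well, and the same injection there gives
`d⁺(u) ≤ d⁻(v) = d⁺(v)`.
-/

open Finset

section

variable {V : Type*} [Fintype V]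

def IsFriendship (D : V → V → Prop) : Prop :=
  ∀ u v, u ≠ v → ∃! w, D u w ∧ D v w

theorem sum_offDiag_card_common_in [DecidableEq V] (D : V → V → Prop) [DecidableRel D] :
    ∑ p ∈ univ.offDiag, #{w | D w p.1 ∧ D w p.2} = ∑ w, #({x | D w x} : Finset V).offDiag := by
  refine (sum_card_bipartiteAbove_eq_sum_card_bipartiteBelow
    fun (p : V × V) w => D w p.1 ∧ D w p.2).trans <| sum_congr rfl fun w _ => congrArg card ?_
  ext ⟨a, b⟩
  simp only [mem_bipartiteBelow, mem_offDiag, mem_filter_univ, mem_univ, true_and]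
  tauto

namespace IsFriendship

variable {D : V → V → Prop}

theorem card_common_eq_one [DecidableRel D] (hD : IsFriendship D) {u v : V} (huv : u ≠ v) :
    #{w | D u w ∧ D v w} = 1 :=
  (Fintype.existsUnique_iff_card_one _).1 (hD u v huv)

theorem card_common_in_le_one [DecidableRel D] (hD : IsFriendship D) {u v : V} (huv : u ≠ v) :
    #{w | D w u ∧ D w v} ≤ 1 := by
  refine card_le_one.2 fun a ha b hb => by_contra fun hab => huv ?_
  simp only [mem_filter_univ] at ha hb
  exact (hD a b hab).unique ⟨ha.1, hb.1⟩ ⟨ha.2, hb.2⟩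

theorem card_in_le_card_out_of_not_adj [DecidableRel D] (hD : IsFriendship D) {u v : V}
    (huv : ¬ D u v) : #{p | D p v} ≤ #{w | D u w} := by
  refine card_le_card_of_forall_subsingleton D (fun p hp => ?_) (fun w hw => ?_)
  · rw [mem_filter_univ] at hp
    obtain ⟨w, ⟨hu, hp⟩, -⟩ := hD u p (by rintro rfl; exact huv hp)
    exact ⟨w, (mem_filter_univ _).2 hu, hp⟩
  · rintro p ⟨hpv, hpw⟩ q ⟨hqv, hqw⟩
    by_contra hpq
    rw [mem_filter_univ] at hpv hqv hw
    exact huv ((hD p q hpq).unique ⟨hpv, hqv⟩ ⟨hpw, hqw⟩ ▸ hw)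

theorem card_in_eq_card_out [DecidableRel D] (hD : IsFriendship D) (hirr : ∀ v, ¬ D v v)
    (v : V) : #{p | D p v} = #{w | D v w} := by
  have hsum : ∑ x, #{p | D p x} = ∑ x, #{w | D x w} :=
    (sum_card_bipartiteAbove_eq_sum_card_bipartiteBelow D).symm
  exact (sum_eq_sum_iff_of_le fun x _ => hD.card_in_le_card_out_of_not_adj (hirr x)).1 hsum v
    (mem_univ v)

theorem converse (hD : IsFriendship D) (hirr : ∀ v, ¬ D v v) :
    IsFriendship fun a b => D b a := by
  classical
  have hsum : ∑ p ∈ univ.offDiag, #{w | D w p.1 ∧ D w p.2} = ∑ p ∈ univ.offDiag, 1 :=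
    calc ∑ p ∈ univ.offDiag, #{w | D w p.1 ∧ D w p.2}
        = ∑ w, #({x | D w x} : Finset V).offDiag := sum_offDiag_card_common_in D
      _ = ∑ w, #({x | D x w} : Finset V).offDiag := by
        simp only [offDiag_card, hD.card_in_eq_card_out hirr]
      _ = ∑ p ∈ univ.offDiag, #{w | D p.1 w ∧ D p.2 w} :=
        (sum_offDiag_card_common_in fun a b => D b a).symm
      _ = ∑ p ∈ univ.offDiag, 1 :=
        sum_congr rfl fun p hp => hD.card_common_eq_one (mem_offDiag.1 hp).2.2
  intro u v huv
  rw [Fintype.existsUnique_iff_card_one]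
  exact (sum_eq_sum_iff_of_le fun p hp => hD.card_common_in_le_one (mem_offDiag.1 hp).2.2).1
    hsum (u, v) (mem_offDiag.2 ⟨mem_univ u, mem_univ v, huv⟩)

theorem card_out_eq_of_not_adj [DecidableRel D] (hD : IsFriendship D) (hirr : ∀ v, ¬ D v v)
    {u v : V} (huv : ¬ D u v) : #{w | D u w} = #{w | D v w} := by
  have hin_le : #{p | D p v} ≤ #{w | D u w} := hD.card_in_le_card_out_of_not_adj huv
  have hout_le : #{w | D u w} ≤ #{p | D p v} :=
    (hD.converse hirr).card_in_le_card_out_of_not_adj huv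
  rw [← hD.card_in_eq_card_out hirr v]
  exact le_antisymm hout_le hin_le

end IsFriendship

end

theorem friendship_digraph_nonadjacent_same_outdeg_general
    {V : Type*} [Fintype V] (D : V → V → Prop) [DecidableRel D]
    (irrefl : ∀ v : V, ¬ D v v)
    (friendship : ∀ u v : V, u ≠ v → ∃! w : V, D u w ∧ D v w)
    (u v : V) (harc : ¬ D u v ∨ ¬ D v u) :
    (univ.filter (fun w => D u w)).card = (univ.filter (fun w => D v w)).card := by
  rcases harc with huv | hvu
  · exact IsFriendship.card_out_eq_of_not_adj friendship irrefl huv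
  · exact (IsFriendship.card_out_eq_of_not_adj friendship irrefl hvu).symm

/-- In a friendship digraph, if `u ≠ v` and `(u,v)` is not an arc or `(v,u)`
is not an arc, then `d⁺(u) = d⁺(v)`. -/
theorem friendship_digraph_nonadjacent_same_outdeg
    {V : Type*} [Fintype V] [DecidableEq V] (D : V → V → Prop) [DecidableRel D]
    (irrefl : ∀ v : V, ¬ D v v)
    (friendship : ∀ u v : V, u ≠ v → ∃! w : V, D u w ∧ D v w)
    (nontrivial : 1 < Fintype.card V)
    (u v : V) (huv : u ≠ v) (harc : ¬ D u v ∨ ¬ D v u) :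
    (univ.filter (fun w => D u w)).card = (univ.filter (fun w => D v w)).card :=
  friendship_digraph_nonadjacent_same_outdeg_general D irrefl friendship u v harc
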